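/- arXiv:2305.13505 — 2 statements merged into one kernel-verified Lean document; each statement's English description precedes it below -/
import Mathlib

section
/- Assume that every family F ⊆ ℕ^ℕ of cardinality at most ℵ₁ is bounded with respect to eventual domination (i.e., 𝔟 > ℵ₁). Let Y be a metric space and let {X_i}_{i∈I} be an uncountable family of metric spaces such that each X_i coarsely embeds into Y. Then there is an uncountable subset J ⊆ I such that the subfamily {X_i}_{i∈J} embeds equi-coarsely into Y. -/
open Filter Set Topology
open scoped ENNReal

noncomputable section

/-! ### Metric notions of embeddability -/

/-- A coarse embedding between (pseudo)metric spaces. -/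
def CoarseEmbeddingMap {X E : Type*} [PseudoMetricSpace X] [PseudoMetricSpace E]
    (f : X → E) : Prop :=
  ∃ κ ω : ℝ → ℝ,
    MonotoneOn κ (Set.Ici 0) ∧ MonotoneOn ω (Set.Ici 0) ∧
    (∀ t : ℝ, 0 ≤ t → 0 ≤ κ t ∧ 0 ≤ ω t) ∧
    Filter.Tendsto κ Filter.atTop Filter.atTop ∧
    ∀ x y : X, κ (dist x y) ≤ dist (f x) (f y) ∧ dist (f x) (f y) ≤ ω (dist x y)

/-- A uniform embedding between (pseudo)metric spaces. -/
def UniformEmbeddingMapNL {X E : Type*} [PseudoMetricSpace X] [PseudoMetricSpace E]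
    (f : X → E) : Prop :=
  ∃ κ ω : ℝ → ℝ,
    MonotoneOn κ (Set.Ici 0) ∧ MonotoneOn ω (Set.Ici 0) ∧
    (∀ t : ℝ, 0 ≤ t → 0 ≤ κ t ∧ 0 ≤ ω t) ∧
    (∀ t : ℝ, 0 < t → 0 < κ t) ∧
    Filter.Tendsto ω (nhdsWithin 0 (Set.Ioi 0)) (nhds 0) ∧
    ∀ x y : X, κ (dist x y) ≤ dist (f x) (f y) ∧ dist (f x) (f y) ≤ ω (dist x y)

/-- A bi-Lipschitz embedding between (pseudo)metric spaces. -/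
def BiLipschitzEmbeddingMap {X E : Type*} [PseudoMetricSpace X] [PseudoMetricSpace E]
    (f : X → E) : Prop :=
  ∃ c C : ℝ, 0 < c ∧ c ≤ C ∧
    ∀ x y : X, c * dist x y ≤ dist (f x) (f y) ∧ dist (f x) (f y) ≤ C * dist x y

/-! ### The set `𝒵`, functional moduli and the classes `M_coarse`, `M_uniform`, `M_Lipschitz` -/

/-- The set `𝒵 = {…,1/3,1/2,1,2,3,…} ⊆ (0,∞)`. -/
def Zset : Set ℝ := {r | ∃ n : ℕ, 1 ≤ n ∧ (r = n ∨ r = 1 / n)}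

/-- Membership in `𝒩`: a non-decreasing `[0,∞]`-valued modulus on `𝒵` (values outside of `𝒵`
are irrelevant dummy values). -/
def Nmod (κ : ℝ → ℝ≥0∞) : Prop := MonotoneOn κ Zset

/-- `t₋`: the largest element of `𝒵` below a real `t > 0`. -/
def tminus (t : ℝ) : ℝ := if 1 ≤ t then (⌊t⌋ : ℝ) else 1 / (⌈1 / t⌉ : ℝ)

/-- `t₊`: the smallest element of `𝒵` above a real `t > 0`. -/
def tplus (t : ℝ) : ℝ := if 1 ≤ t then (⌈t⌉ : ℝ) else 1 / (⌊1 / t⌋ : ℝ)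

/-- The pair `(κ, ω)` belongs to `M_coarse`. -/
def Mcoarse (κ ω : ℝ → ℝ≥0∞) : Prop :=
  (∀ r ∈ Zset, ω r < ⊤) ∧ Filter.Tendsto (fun n : ℕ => κ n) Filter.atTop (nhds ⊤)

/-- The pair `(κ, ω)` belongs to `M_uniform`. -/
def Muniform (κ ω : ℝ → ℝ≥0∞) : Prop :=
  (∀ r ∈ Zset, 0 < κ r) ∧
    Filter.Tendsto (fun n : ℕ => ω (1 / (n + 1 : ℝ))) Filter.atTop (nhds 0)

/-- The pair `(κ, ω)` belongs to `M_Lipschitz`. -/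
def MLipschitz (κ ω : ℝ → ℝ≥0∞) : Prop :=
  ∃ c C : ℝ, 0 < c ∧ c < C ∧
    ∀ r ∈ Zset, ENNReal.ofReal (c * r) ≤ κ r ∧ ω r ≤ ENNReal.ofReal (C * r)

/-! ### Ill-foundedness and ranks of binary relations restricted to subsets -/

/-- The relation `r` is ill-founded on the subset `S`. -/
def IllFoundedOn {A : Type*} (r : A → A → Prop) (S : Set A) : Prop :=
  ∃ a : ℕ → A, (∀ n, a n ∈ S) ∧ ∀ n, r (a (n + 1)) (a n)

/-- The rank `rk(S, r)` of a relation `r`, well-founded on a subset `S`. -/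
def relRankOn {A : Type*} (r : A → A → Prop) (S : Set A)
    (h : WellFounded fun a b : S => r a b) : Ordinal :=
  ⨆ a : S, Order.succ (h.apply a).rank

/-! ### The simple embeddability ranks -/

/-- A quadruple `(κ, ω, k, φ)` as in the definition of `Ω(D,E)`; the countable dense set `D` is
given by an enumeration `x : ℕ → X` and `φ : D → E` is represented by the map on indices. -/
structure Quad (E : Type*) where
  kappa : ℝ → ℝ≥0∞
  omega : ℝ → ℝ≥0∞
  k : ℕ
  phi : ℕ → E

/-- The set `Ω(D,E)` where `D` is enumerated by `x : ℕ → X`. -/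
def OmegaSet {X E : Type*} [MetricSpace X] [MetricSpace E] (x : ℕ → X) : Set (Quad E) :=
  {q | Nmod q.kappa ∧ Nmod q.omega ∧
    (∀ i j : ℕ, x i = x j → q.phi i = q.phi j) ∧
    ∀ i < q.k, ∀ j < q.k, x i ≠ x j →
      q.kappa (tminus (dist (x i) (x j))) ≤ edist (q.phi i) (q.phi j) ∧
      edist (q.phi i) (q.phi j) ≤ q.omega (tplus (dist (x i) (x j)))}

/-- The set `Coa(D,E)`. -/
def CoaSet {X E : Type*} [MetricSpace X] [MetricSpace E] (x : ℕ → X) : Set (Quad E) :=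
  {q ∈ OmegaSet x | Mcoarse q.kappa q.omega}

/-- The set `Uni(D,E)`. -/
def UniSet {X E : Type*} [MetricSpace X] [MetricSpace E] (x : ℕ → X) : Set (Quad E) :=
  {q ∈ OmegaSet x | Muniform q.kappa q.omega}

/-- The set `Lip(D,E)`. -/
def LipSet {X E : Type*} [MetricSpace X] [MetricSpace E] (x : ℕ → X) : Set (Quad E) :=
  {q ∈ OmegaSet x | MLipschitz q.kappa q.omega}

/-- The relation `<` on `Ω(D,E)`. -/
def QuadRel {E : Type*} (p q : Quad E) : Prop :=
  p.kappa = q.kappa ∧ p.omega = q.omega ∧ p.k = q.k + 1 ∧ ∀ i < q.k, p.phi i = q.phi i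

/-! ### Embeddability ranks based on Schauder bases -/

/-- The copy of `ℤ` inside `ℝ`. -/
def ZR : Set ℝ := Set.range ((↑) : ℤ → ℝ)

/-- The copy of `ℚ` inside `ℝ`. -/
def QR : Set ℝ := Set.range ((↑) : ℚ → ℝ)

/-- `R[A]`: the set of `R`-linear combinations of the vectors `e i`, `i ∈ A`. -/
def RComb {X : Type*} [NormedAddCommGroup X] [Module ℝ X] (R : Set ℝ) (e : ℕ → X)
    (A : Finset ℕ) : Set X :=
  {x | ∃ c : ℕ → ℝ, (∀ i, c i ∈ R) ∧ x = ∑ i ∈ A, c i • e i}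

/-- `R[e₁,e₂,…]`: the set of all finite `R`-linear combinations of the vectors `e i`. -/
def RCombAll {X : Type*} [NormedAddCommGroup X] [Module ℝ X] (R : Set ℝ) (e : ℕ → X) : Set X :=
  ⋃ A : Finset ℕ, RComb R e A

/-- `A ≺* B` for finite subsets of `ℕ`: `A` is obtained from `B` by adding one element larger
than all elements of `B`. -/
def PrecStar (A B : Finset ℕ) : Prop := ∃ m : ℕ, (∀ b ∈ B, b < m) ∧ A = insert m B

/-- A quadruple `(κ, ω, A, φ)` as in the definition of `Θ(R,(eₙ),E)`; the finite subset `A` of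
`{e₁,e₂,…}` is recorded by the finite set of indices, and `φ` (a map on `R[e₁,e₂,…]`) is
represented by a map on `X` (only its values on `R`-linear combinations are ever relevant). -/
structure QuadF (X E : Type*) where
  kappa : ℝ → ℝ≥0∞
  omega : ℝ → ℝ≥0∞
  A : Finset ℕ
  phi : X → E

/-- The set `Θ(R,(eₙ),E)`. -/
def ThetaSet {X E : Type*} [NormedAddCommGroup X] [Module ℝ X] [MetricSpace E]
    (R : Set ℝ) (e : ℕ → X) : Set (QuadF X E) :=
  {q | Nmod q.kappa ∧ Nmod q.omega ∧
    ∀ x ∈ RComb R e q.A, ∀ y ∈ RComb R e q.A, x ≠ y →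
      q.kappa (tminus (dist x y)) ≤ edist (q.phi x) (q.phi y) ∧
      edist (q.phi x) (q.phi y) ≤ q.omega (tplus (dist x y))}

/-- The set `Coa(R,(eₙ),E)`. -/
def CoaTheta {X E : Type*} [NormedAddCommGroup X] [Module ℝ X] [MetricSpace E]
    (R : Set ℝ) (e : ℕ → X) : Set (QuadF X E) :=
  {q ∈ ThetaSet R e | Mcoarse q.kappa q.omega}

/-- The set `Uni(R,(eₙ),E)`. -/
def UniTheta {X E : Type*} [NormedAddCommGroup X] [Module ℝ X] [MetricSpace E]
    (R : Set ℝ) (e : ℕ → X) : Set (QuadF X E) :=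
  {q ∈ ThetaSet R e | Muniform q.kappa q.omega}

/-- The set `Lip(R,(eₙ),E)`. -/
def LipTheta {X E : Type*} [NormedAddCommGroup X] [Module ℝ X] [MetricSpace E]
    (R : Set ℝ) (e : ℕ → X) : Set (QuadF X E) :=
  {q ∈ ThetaSet R e | MLipschitz q.kappa q.omega}

/-- The relation `<` on `Θ(R,(eₙ),E)`. -/
def QuadFRel {X E : Type*} [NormedAddCommGroup X] [Module ℝ X]
    (R : Set ℝ) (e : ℕ → X) (p q : QuadF X E) : Prop :=
  p.kappa = q.kappa ∧ p.omega = q.omega ∧ PrecStar p.A q.A ∧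
    ∀ x ∈ RComb R e q.A, p.phi x = q.phi x

/-! ### Schauder bases, basic sequences, subsymmetric bases -/

/-- `(eₙ)` is a Schauder basis of the subset `S`: every element of `S` has a unique
norm-convergent expansion. -/
def IsSchauderBasisOf {X : Type*} [NormedAddCommGroup X] [Module ℝ X] (e : ℕ → X)
    (S : Set X) : Prop :=
  ∀ x ∈ S, ∃! a : ℕ → ℝ,
    Filter.Tendsto (fun N => ∑ i ∈ Finset.range N, a i • e i) Filter.atTop (nhds x)

/-- `(eₙ)` is a Schauder basis of the whole space `X`. -/
def IsSchauderBasis {X : Type*} [NormedAddCommGroup X] [Module ℝ X] (e : ℕ → X) : Prop :=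
  IsSchauderBasisOf e Set.univ

/-- `(eₙ)` is a basic sequence: it is a Schauder basis of its closed linear span. -/
def IsBasicSequence {X : Type*} [NormedAddCommGroup X] [Module ℝ X] (e : ℕ → X) : Prop :=
  IsSchauderBasisOf e (closure (Submodule.span ℝ (Set.range e) : Set X))

/-- `(eₙ)` is a subsymmetric basic sequence. -/
def IsSubsymmetric {X : Type*} [NormedAddCommGroup X] [Module ℝ X] (e : ℕ → X) : Prop :=
  IsBasicSequence e ∧ ∃ C : ℝ, 1 ≤ C ∧ ∀ n : ℕ → ℕ, StrictMono n →
    ∀ s : Finset ℕ, ∀ a : ℕ → ℝ,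
      C⁻¹ * ‖∑ k ∈ s, a k • e k‖ ≤ ‖∑ k ∈ s, a k • e (n k)‖ ∧
      ‖∑ k ∈ s, a k • e (n k)‖ ≤ C * ‖∑ k ∈ s, a k • e k‖

/-! ### Schreier families -/

/-- `n ≤ A`: either `A = ∅` or `n ≤ min A`. -/
def natLE (n : ℕ) (A : Finset ℕ) : Prop := ∀ a ∈ A, n ≤ a

/-- `A < B`: either one is empty or `max A < min B`. -/
def finLT (A B : Finset ℕ) : Prop := ∀ a ∈ A, ∀ b ∈ B, a < b

/-- The Schreier families `S_α`, relative to a fixed assignment `lseq` of fundamental sequences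
to (countable) limit ordinals; here `lseq l n` denotes `λ_{n+1}` in 1-based notation. -/
def Schreier (lseq : Ordinal → ℕ → Ordinal) (α : Ordinal) : Set (Finset ℕ) :=
  Ordinal.limitRecOn α
    ({A | ∃ n : ℕ, 1 ≤ n ∧ A = {n}} ∪ {∅})
    (fun _ S => {A | ∃ n : ℕ, 1 ≤ n ∧ ∃ f : ℕ → Finset ℕ,
      (∀ i < n, f i ∈ S) ∧ natLE n (f 0) ∧
      (∀ i j : ℕ, i < j → j < n → finLT (f i) (f j)) ∧
      A = (Finset.range n).biUnion f})
    (fun o _ ih => {A | ∃ n : ℕ, natLE (n + 1) A ∧ ∃ h : lseq o n < o, A ∈ ih (lseq o n) h})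

/-- `lseq` is a legitimate assignment of fundamental sequences: to every countable limit
ordinal `l` it assigns a strictly increasing sequence of smaller ordinals with supremum `l`. -/
def IsFundSeq (lseq : Ordinal → ℕ → Ordinal) : Prop :=
  ∀ l : Ordinal, Order.IsSuccLimit l → l < (Cardinal.aleph 1).ord →
    StrictMono (lseq l) ∧ (∀ n, lseq l n < l) ∧ (⨆ n, lseq l n) = l

/-! ### The space `c₀` and `Z[S_α]_{c₀}` -/

/-- The Banach space `c₀` of real sequences vanishing at infinity, with the sup norm. -/
abbrev c0 : Type := ZeroAtInftyContinuousMap ℕ ℝ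

/-- The standard unit vector basis of `c₀`. -/
def stdBasis (n : ℕ) : c0 :=
  { toFun := fun m => if m = n then (1 : ℝ) else 0
    continuous_toFun := continuous_of_discreteTopology
    zero_at_infty' := by
      refine Filter.Tendsto.mono_left ?_ Filter.cocompact_le_cofinite
      refine tendsto_nhds_of_eventually_eq ?_
      refine Filter.eventually_cofinite.mpr (Set.Finite.subset (Set.finite_singleton n) ?_)
      intro m hm
      by_contra h
      exact hm (if_neg h) }

/-- The metric space `Z[S_α]_{c₀}` (as a subset of `c₀`). -/
def ZSchreierSet (lseq : Ordinal → ℕ → Ordinal) (α : Ordinal) : Set c0 :=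
  {x | ∃ A ∈ Schreier lseq α, ∃ t : ℕ → ℤ, x = ∑ i ∈ A, (t i : ℝ) • stdBasis i}

/-! ### Eventual domination -/

/-- The family `F ⊆ ℕ^ℕ` is bounded with respect to eventual domination. -/
def EvDomBounded (F : Set (ℕ → ℕ)) : Prop :=
  ∃ g : ℕ → ℕ, ∀ f ∈ F, ∀ᶠ m in Filter.atTop, f m < g m

end

/-!
Encode the two moduli of the `i`-th coarse embedding in one function `P i : ℕ → ℕ`
(`ω_i(m) ≤ P i m`, and `κ_i ≥ m` beyond `P i m`). An `ℵ₁`-sized uncountable part of this family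
is eventually dominated by a single non-decreasing `g`, and since countably many thresholds
cannot split an uncountable set into countable pieces, uncountably many `i` share one threshold
`N`. For those `i` the common moduli are `t ↦ g (N + ⌈t⌉)` from above and, from below, the
largest `m ≥ N` with `g m ≤ t`.
-/

open Cardinal

section UncountableDomination

theorem exists_not_countable_forall_ge_of_eventually {I : Type*} {S : Set I}
    (hS : ¬ S.Countable) {p : I → ℕ → Prop} (hp : ∀ i ∈ S, ∀ᶠ m in atTop, p i m) :
    ∃ N : ℕ, ∃ J ⊆ S, ¬ J.Countable ∧ ∀ i ∈ J, ∀ m ≥ N, p i m := by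
  choose! N hN using fun i hi => eventually_atTop.mp (hp i hi)
  have hcover : S = ⋃ n : ℕ, {i ∈ S | N i = n} := by
    ext i
    simp
  obtain ⟨n, hn⟩ : ∃ n : ℕ, ¬ {i ∈ S | N i = n}.Countable := by
    by_contra! hcount
    exact hS (hcover ▸ countable_iUnion hcount)
  refine ⟨n, _, sep_subset _ _, hn, ?_⟩
  rintro i ⟨hiS, rfl⟩
  exact hN i hiS

theorem EvDomBounded.exists_monotone {F : Set (ℕ → ℕ)} (hF : EvDomBounded F) :
    ∃ g : ℕ → ℕ, Monotone g ∧ ∀ f ∈ F, ∀ᶠ m in atTop, f m < g m := by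
  obtain ⟨g, hg⟩ := hF
  refine ⟨partialSups g, (partialSups g).monotone, fun f hf => ?_⟩
  filter_upwards [hg f hf] with m hm
  exact hm.trans_le (le_partialSups g m)

theorem exists_subset_mk_eq_aleph_one {I : Type*} (hI : ¬ (univ : Set I).Countable) :
    ∃ S : Set I, #S = ℵ₁ := by
  refine le_mk_iff_exists_set.mp (not_lt.mp fun hlt => hI ?_)
  rwa [← le_aleph0_iff_set_countable, ← lt_aleph_one_iff, mk_univ]

theorem not_countable_of_mk_eq_aleph_one {I : Type*} {S : Set I} (hS : #S = ℵ₁) :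
    ¬ S.Countable := by
  rw [← le_aleph0_iff_set_countable, hS]
  exact aleph0_lt_aleph_one.not_ge

theorem exists_not_countable_forall_ge_lt
    (hb : ∀ F : Set (ℕ → ℕ), #F ≤ ℵ₁ → EvDomBounded F)
    {I : Type*} (hI : ¬ (univ : Set I).Countable) (P : I → ℕ → ℕ) :
    ∃ g : ℕ → ℕ, Monotone g ∧ ∃ N : ℕ, ∃ J : Set I, ¬ J.Countable ∧
      ∀ i ∈ J, ∀ m ≥ N, P i m < g m := by
  obtain ⟨S, hS⟩ := exists_subset_mk_eq_aleph_one hI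
  have hcard : #(P '' S) ≤ ℵ₁ := by
    rw [← lift_le_aleph_one.{_, 0}]
    simpa [hS] using mk_image_le_lift (f := P) (s := S)
  obtain ⟨g, hg, hPg⟩ := (hb _ hcard).exists_monotone
  obtain ⟨N, J, -, hJ, hJN⟩ := exists_not_countable_forall_ge_of_eventually
    (not_countable_of_mk_eq_aleph_one hS) (fun i hi => hPg (P i) (mem_image_of_mem P hi))
  exact ⟨g, hg, N, J, hJ, hJN⟩

end UncountableDomination

section CommonModuli

def IsCoarseProfile (κ ω : ℝ → ℝ) (P : ℕ → ℕ) : Prop :=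
  ∀ m : ℕ, ω m ≤ P m ∧ ∀ t : ℝ, (P m : ℝ) ≤ t → (m : ℝ) ≤ κ t

theorem exists_isCoarseProfile {κ : ℝ → ℝ} (hκ : Tendsto κ atTop atTop) (ω : ℝ → ℝ) :
    ∃ P : ℕ → ℕ, IsCoarseProfile κ ω P := by
  choose T hT using fun m : ℕ => tendsto_atTop_atTop.mp hκ m
  refine ⟨fun m => max ⌈ω m⌉₊ ⌈T m⌉₊, fun m => ⟨?_, fun t ht => hT m t ?_⟩⟩
  · exact (Nat.le_ceil _).trans (by exact_mod_cast le_max_left _ _)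
  · calc T m ≤ ⌈T m⌉₊ := Nat.le_ceil _
      _ ≤ (max ⌈ω m⌉₊ ⌈T m⌉₊ : ℕ) := by exact_mod_cast le_max_right _ _
      _ ≤ t := ht

variable (g : ℕ → ℕ) (N : ℕ)

/-- The largest `m ≥ N` with `g m ≤ t` (and `0` if there is none); the search is cut off at
`⌊t⌋₊` only to make it finite. -/
noncomputable def lowerModulus (t : ℝ) : ℝ :=
  Nat.findGreatest (fun m => N ≤ m ∧ (g m : ℝ) ≤ t) ⌊t⌋₊

noncomputable def upperModulus (t : ℝ) : ℝ := g (N + ⌈t⌉₊)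

theorem lowerModulus_nonneg (t : ℝ) : 0 ≤ lowerModulus g N t := Nat.cast_nonneg _

theorem upperModulus_nonneg (t : ℝ) : 0 ≤ upperModulus g N t := Nat.cast_nonneg _

theorem lowerModulus_monotone : Monotone (lowerModulus g N) := fun _ _ hst =>
  Nat.cast_le.mpr <| Nat.findGreatest_mono (fun _ hm => ⟨hm.1, hm.2.trans hst⟩)
    (Nat.floor_mono hst)

theorem upperModulus_monotone {g : ℕ → ℕ} (hg : Monotone g) : Monotone (upperModulus g N) :=
  fun _ _ hst => Nat.cast_le.mpr <| hg <| Nat.add_le_add_left (Nat.ceil_mono hst) N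

theorem tendsto_lowerModulus : Tendsto (lowerModulus g N) atTop atTop := by
  refine tendsto_atTop_atTop.mpr fun b => ?_
  set M := max N ⌈b⌉₊
  refine ⟨max (g M) M, fun t ht => ?_⟩
  have hM : M ≤ lowerModulus g N t := by
    refine Nat.cast_le.mpr (Nat.le_findGreatest ?_ ⟨le_max_left _ _, ?_⟩)
    · exact Nat.le_floor ((le_max_right _ _).trans ht)
    · exact (le_max_left _ _).trans ht
  exact (Nat.le_ceil b).trans ((Nat.cast_le.mpr (le_max_right _ _)).trans hM)

theorem lowerModulus_le {t c : ℝ} (hc : 0 ≤ c) (h : ∀ m ≥ N, (g m : ℝ) ≤ t → (m : ℝ) ≤ c) :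
    lowerModulus g N t ≤ c := by
  unfold lowerModulus
  set m := Nat.findGreatest (fun m => N ≤ m ∧ (g m : ℝ) ≤ t) ⌊t⌋₊
  rcases eq_or_ne m 0 with hm | hm
  · simpa [hm] using hc
  · obtain ⟨hNm, hgm⟩ := Nat.findGreatest_of_ne_zero rfl hm
    exact h m hNm hgm

theorem dist_bounds_of_isCoarseProfile {X Y : Type*} [PseudoMetricSpace X] [PseudoMetricSpace Y]
    {f : X → Y} {κ ω : ℝ → ℝ} (hω : MonotoneOn ω (Ici 0))
    (hf : ∀ x y, κ (dist x y) ≤ dist (f x) (f y) ∧ dist (f x) (f y) ≤ ω (dist x y))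
    {P : ℕ → ℕ} (hP : IsCoarseProfile κ ω P) {g : ℕ → ℕ} {N : ℕ} (hPg : ∀ m ≥ N, P m ≤ g m)
    (x y : X) :
    lowerModulus g N (dist x y) ≤ dist (f x) (f y) ∧
      dist (f x) (f y) ≤ upperModulus g N (dist x y) := by
  constructor
  · refine lowerModulus_le g N dist_nonneg fun m hNm hgm => ?_
    have hPm : (P m : ℝ) ≤ dist x y := (Nat.cast_le.mpr (hPg m hNm)).trans hgm
    exact ((hP m).2 _ hPm).trans (hf x y).1
  · set m := N + ⌈dist x y⌉₊
    have hdm : dist x y ≤ m := (Nat.le_ceil _).trans (by exact_mod_cast Nat.le_add_left _ _)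
    calc dist (f x) (f y) ≤ ω (dist x y) := (hf x y).2
      _ ≤ ω m := hω dist_nonneg (mem_Ici.mpr (Nat.cast_nonneg m)) hdm
      _ ≤ P m := (hP m).1
      _ ≤ upperModulus g N (dist x y) := Nat.cast_le.mpr (hPg m (Nat.le_add_right _ _))

end CommonModuli

theorem stmt18 (hb : ∀ F : Set (ℕ → ℕ), Cardinal.mk F ≤ Cardinal.aleph 1 → EvDomBounded F)
    {Y : Type*} [MetricSpace Y] {I : Type*} (hI : ¬ (Set.univ : Set I).Countable)
    (X : I → Type*) [∀ i, MetricSpace (X i)]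
    (h : ∀ i, ∃ f : X i → Y, CoarseEmbeddingMap f) :
    ∃ J : Set I, ¬ J.Countable ∧
      ∃ κ ω : ℝ → ℝ, MonotoneOn κ (Set.Ici 0) ∧ MonotoneOn ω (Set.Ici 0) ∧
        (∀ t : ℝ, 0 ≤ t → 0 ≤ κ t ∧ 0 ≤ ω t) ∧
        Filter.Tendsto κ Filter.atTop Filter.atTop ∧
        ∀ i ∈ J, ∃ f : X i → Y, ∀ x y : X i,
          κ (dist x y) ≤ dist (f x) (f y) ∧ dist (f x) (f y) ≤ ω (dist x y) := by
  unfold CoarseEmbeddingMap at h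
  choose f κ ω _ hω _ hκ hf using h
  choose P hP using fun i => exists_isCoarseProfile (hκ i) (ω i)
  obtain ⟨g, hg, N, J, hJ, hPg⟩ := exists_not_countable_forall_ge_lt hb hI P
  refine ⟨J, hJ, lowerModulus g N, upperModulus g N,
    (lowerModulus_monotone g N).monotoneOn _, (upperModulus_monotone N hg).monotoneOn _,
    fun t _ => ⟨lowerModulus_nonneg g N t, upperModulus_nonneg g N t⟩,
    tendsto_lowerModulus g N, fun i hi => ⟨f i, ?_⟩⟩
  exact dist_bounds_of_isCoarseProfile (hω i) (hf i) (hP i) fun m hm => (hPg i hi m hm).le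
end

section
/- Let (e_n) be the standard unit vector basis of c₀, let E be a metric space, and let α < ω₁. If Z[S_α]_{c₀} coarsely embeds into E, then there exists a map f : S_α → Coa(ℤ,(e_n),E) such that A ≺* B implies f(A) < f(B) for all A, B ∈ S_α; in particular, if the relation < is well-founded on Coa(ℤ,(e_n),E), then rk(Coa(ℤ,(e_n),E), <) ≥ ω^α + 1. -/
open Filter Set Topology
open scoped ENNReal

/-! A coarse embedding `f` of `Z[S_α]_{c₀}`, extended arbitrarily to `c₀`, yields for every
`A ∈ S_α` the quadruple `(κ, ω, A, f)` in `Coa(ℤ,(eₙ),E)`; since these quadruples share `κ`, `ω`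
and `f`, `A ≺* B` becomes `<`. Composing with the rank of a well-founded `<` gives a function on
`S_α` decreasing along `≺*`, so it suffices that `∅` has `≺*`-rank at least `ω ^ α` in every tail
`{A ∈ S_α | n ≤ A}`. This goes by induction on `α`: a member of `S_{o+1}` above `K` may consist of
`K` successive blocks from `S_o`, each of which contributes `ω ^ o`, and at a limit `λ` the tails
`{A ∈ S_{λₘ} | m + 1 ≤ A}` lie inside `S_λ`. -/

universe u

lemma tminus_nonneg {t : ℝ} (ht : 0 < t) : 0 ≤ tminus t := by
  unfold tminus
  split_ifs with h
  · have : (1 : ℤ) ≤ ⌊t⌋ := Int.le_floor.mpr (by exact_mod_cast h)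
    positivity
  · positivity

lemma tminus_le {t : ℝ} (ht : 0 < t) : tminus t ≤ t := by
  unfold tminus
  split_ifs with h
  · exact Int.floor_le t
  · have h₀ : 0 < 1 / t := by positivity
    calc 1 / (⌈1 / t⌉ : ℝ) ≤ 1 / (1 / t) := one_div_le_one_div_of_le h₀ (Int.le_ceil _)
      _ = t := one_div_one_div t

lemma le_tplus {t : ℝ} (ht : 0 < t) : t ≤ tplus t := by
  unfold tplus
  split_ifs with h
  · exact Int.le_ceil t
  · have h₁ : (1 : ℤ) ≤ ⌊1 / t⌋ :=
      Int.le_floor.mpr (by exact_mod_cast (one_lt_one_div ht (not_le.mp h)).le)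
    calc t = 1 / (1 / t) := (one_div_one_div t).symm
      _ ≤ 1 / (⌊1 / t⌋ : ℝ) := one_div_le_one_div_of_le (by exact_mod_cast h₁) (Int.floor_le _)

lemma Zset_subset_Ici : Zset ⊆ Ici 0 := by
  rintro r ⟨n, -, rfl | rfl⟩ <;> simp [Nat.cast_nonneg]

section Schreier

variable (lseq : Ordinal.{u} → ℕ → Ordinal.{u})

lemma schreier_zero : Schreier lseq 0 = {A | ∃ n : ℕ, 1 ≤ n ∧ A = {n}} ∪ {∅} :=
  Ordinal.limitRecOn_zero _ _ _

lemma schreier_add_one (o : Ordinal.{u}) :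
    Schreier lseq (o + 1) = {A | ∃ n : ℕ, 1 ≤ n ∧ ∃ f : ℕ → Finset ℕ,
      (∀ i < n, f i ∈ Schreier lseq o) ∧ natLE n (f 0) ∧
      (∀ i j : ℕ, i < j → j < n → finLT (f i) (f j)) ∧
      A = (Finset.range n).biUnion f} :=
  Ordinal.limitRecOn_add_one _ _ _ _

lemma schreier_limit {o : Ordinal.{u}} (ho : Order.IsSuccLimit o) :
    Schreier lseq o = {A | ∃ n : ℕ, natLE (n + 1) A ∧
      ∃ _ : lseq o n < o, A ∈ Schreier lseq (lseq o n)} :=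
  Ordinal.limitRecOn_limit _ _ _ _ ho

variable {lseq}

lemma mem_schreier_of_mem_fundSeq (hseq : IsFundSeq lseq) {o : Ordinal.{u}}
    (ho : Order.IsSuccLimit o) (ho₁ : o < (Cardinal.aleph 1).ord) {m : ℕ} {A : Finset ℕ}
    (hA : A ∈ Schreier lseq (lseq o m)) (hmA : natLE (m + 1) A) : A ∈ Schreier lseq o := by
  rw [schreier_limit lseq ho]
  exact ⟨m, hmA, (hseq o ho ho₁).2.1 m, hA⟩

lemma empty_mem_schreier (hseq : IsFundSeq lseq) {α : Ordinal.{u}}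
    (hα : α < (Cardinal.aleph 1).ord) : ∅ ∈ Schreier lseq α := by
  induction α using Ordinal.limitRecOn with
  | zero => simp [schreier_zero]
  | add_one o IH =>
    rw [schreier_add_one]
    exact ⟨1, le_rfl, fun _ => ∅, fun _ _ => IH ((Order.lt_add_one_iff.mpr le_rfl).trans hα),
      by simp [natLE], by simp [finLT], by simp⟩
  | limit o ho IH =>
    have hlt := (hseq o ho hα).2.1 0
    exact mem_schreier_of_mem_fundSeq hseq ho hα (IH _ hlt (hlt.trans hα)) (by simp [natLE])

end Schreier

lemma natLE.mono {m n : ℕ} {A : Finset ℕ} (h : natLE n A) (hmn : m ≤ n) : natLE m A :=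
  fun a ha => hmn.trans (h a ha)

section RankBound

open Ordinal

def DecreasesAlongPrecStar (F : Set (Finset ℕ)) (g : Finset ℕ → Ordinal.{u}) : Prop :=
  ∀ ⦃A⦄, A ∈ F → ∀ ⦃B⦄, B ∈ F → PrecStar A B → g A < g B

lemma DecreasesAlongPrecStar.mono {F F' : Set (Finset ℕ)} {g : Finset ℕ → Ordinal.{u}}
    (h : DecreasesAlongPrecStar F' g) (hF : F ⊆ F') : DecreasesAlongPrecStar F g :=
  fun _ hA _ hB => h (hF hA) (hF hB)

/-- "`∅` has `≺*`-rank at least `ω ^ α` in every tail `{A ∈ S_α | n ≤ A}`", stated through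
functions decreasing along `≺*`; the offset `δ` lets the successor step stack such bounds. -/
def SchreierRankBound (lseq : Ordinal.{u} → ℕ → Ordinal.{u}) (α : Ordinal.{u}) : Prop :=
  ∀ n : ℕ, 1 ≤ n → ∀ (g : Finset ℕ → Ordinal.{u}) (δ : Ordinal.{u}),
    DecreasesAlongPrecStar {A ∈ Schreier lseq α | natLE n A} g →
    (∀ A ∈ Schreier lseq α, natLE n A → δ ≤ g A) → δ + ω ^ α ≤ g ∅

variable {lseq : Ordinal.{u} → ℕ → Ordinal.{u}}

lemma schreierRankBound_zero : SchreierRankBound lseq 0 := by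
  intro n hn g δ hg hδ
  have h₀ : ∅ ∈ {A ∈ Schreier lseq 0 | natLE n A} := by simp [schreier_zero, natLE]
  have h₁ : {n} ∈ {A ∈ Schreier lseq 0 | natLE n A} := by simp [schreier_zero, natLE, hn]
  have hlt : g {n} < g ∅ := hg h₁ h₀ ⟨n, by simp, rfl⟩
  rw [opow_zero]
  exact Order.add_one_le_of_lt ((hδ _ h₁.1 h₁.2).trans_lt hlt)

def blockUnion (L : List (Finset ℕ)) : Finset ℕ := L.toFinset.biUnion id

lemma mem_blockUnion {L : List (Finset ℕ)} {a : ℕ} : a ∈ blockUnion L ↔ ∃ B ∈ L, a ∈ B := by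
  simp [blockUnion]

lemma blockUnion_append_singleton (L : List (Finset ℕ)) (B : Finset ℕ) :
    blockUnion (L ++ [B]) = blockUnion L ∪ B := by
  ext a
  simp [mem_blockUnion, or_and_right, exists_or]

def IsBlockChain (S : Set (Finset ℕ)) (K : ℕ) (L : List (Finset ℕ)) : Prop :=
  (∀ B ∈ L, B ∈ S ∧ natLE K B) ∧ L.Pairwise finLT

namespace IsBlockChain

variable {S : Set (Finset ℕ)} {K : ℕ} {L : List (Finset ℕ)}

lemma natLE_blockUnion (hL : IsBlockChain S K L) : natLE K (blockUnion L) := by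
  intro a ha
  obtain ⟨B, hB, haB⟩ := mem_blockUnion.mp ha
  exact (hL.1 B hB).2 a haB

lemma append_singleton (hL : IsBlockChain S K L) {B : Finset ℕ} (hB : B ∈ S)
    (hKB : natLE K B) (hLB : finLT (blockUnion L) B) : IsBlockChain S K (L ++ [B]) := by
  refine ⟨fun C hC => ?_, List.pairwise_append.mpr ⟨hL.2, by simp, fun C hC D hD => ?_⟩⟩
  · rcases List.mem_append.mp hC with hC | hC
    · exact hL.1 C hC
    · obtain rfl := List.mem_singleton.mp hC
      exact ⟨hB, hKB⟩
  · obtain rfl := List.mem_singleton.mp hD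
    exact fun a ha b hb => hLB a (mem_blockUnion.mpr ⟨C, hC, ha⟩) b hb

lemma blockUnion_mem_schreier_add_one {o : Ordinal.{u}} (hK : 1 ≤ K)
    (hL : IsBlockChain (Schreier lseq o) K L) (hlen : L.length ≤ K)
    (hempty : ∅ ∈ Schreier lseq o) : blockUnion L ∈ Schreier lseq (o + 1) := by
  have hblock : ∀ i, i < L.length → L.getD i ∅ ∈ L := fun i hi => by
    rw [List.getD_eq_getElem _ _ hi]
    exact List.getElem_mem hi
  have hpad : ∀ i, L.length ≤ i → L.getD i ∅ = ∅ := fun i hi => List.getD_eq_default _ _ hi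
  rw [schreier_add_one]
  refine ⟨K, hK, fun i => L.getD i ∅, fun i _ => ?_, ?_, fun i j hij _ => ?_, ?_⟩ <;> try dsimp only
  · rcases lt_or_ge i L.length with hi | hi
    · exact (hL.1 _ (hblock i hi)).1
    · rw [hpad i hi]; exact hempty
  · rcases lt_or_ge 0 L.length with hi | hi
    · exact (hL.1 _ (hblock 0 hi)).2
    · rw [hpad 0 hi]; simp [natLE]
  · rcases lt_or_ge j L.length with hj | hj
    · simp only [List.getD_eq_getElem _ _ hj, List.getD_eq_getElem _ _ (hij.trans hj)]
      exact List.pairwise_iff_getElem.mp hL.2 i j (hij.trans hj) hj hij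
    · rw [hpad j hj]; simp [finLT]
  · ext a
    simp only [mem_blockUnion, Finset.mem_biUnion, Finset.mem_range]
    constructor
    · rintro ⟨B, hB, haB⟩
      obtain ⟨i, hi, rfl⟩ := List.getElem_of_mem hB
      exact ⟨i, hi.trans_le hlen, by rwa [List.getD_eq_getElem _ _ hi]⟩
    · rintro ⟨i, -, hai⟩
      rcases lt_or_ge i L.length with hi | hi
      · exact ⟨_, hblock i hi, hai⟩
      · rw [hpad i hi] at hai; simp at hai

end IsBlockChain

lemma add_opow_mul_le_of_isBlockChain {o : Ordinal.{u}} (IH : SchreierRankBound lseq o)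
    (hempty : ∅ ∈ Schreier lseq o) {K : ℕ} (hK : 1 ≤ K) {g : Finset ℕ → Ordinal.{u}}
    {δ : Ordinal.{u}} (hg : DecreasesAlongPrecStar {A ∈ Schreier lseq (o + 1) | natLE K A} g)
    (hδ : ∀ A ∈ Schreier lseq (o + 1), natLE K A → δ ≤ g A) :
    ∀ (d : ℕ) (L : List (Finset ℕ)), L.length + d = K → IsBlockChain (Schreier lseq o) K L →
      δ + ω ^ o * d ≤ g (blockUnion L) := by
  intro d
  induction d with
  | zero =>
    intro L hlen hL
    simpa using hδ _ (hL.blockUnion_mem_schreier_add_one hK (by omega) hempty) hL.natLE_blockUnion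
  | succ d IHd =>
    intro L hlen hL
    set P := blockUnion L
    obtain ⟨N, hKN, hPN⟩ : ∃ N, K ≤ N ∧ ∀ a ∈ P, a < N :=
      ⟨K + P.sup id + 1, by omega, fun a ha => by
        have := Finset.le_sup (f := id) ha
        simp only [id] at this
        omega⟩
    have hext : ∀ B ∈ Schreier lseq o, natLE N B → IsBlockChain (Schreier lseq o) K (L ++ [B]) :=
      fun B hB hNB => hL.append_singleton hB (hNB.mono hKN)
        (fun a ha b hb => (hPN a ha).trans_le (hNB b hb))
    have hmem : ∀ B ∈ Schreier lseq o, natLE N B →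
        P ∪ B ∈ {A ∈ Schreier lseq (o + 1) | natLE K A} := fun B hB hNB => by
      rw [← blockUnion_append_singleton]
      have hLB := hext B hB hNB
      exact ⟨hLB.blockUnion_mem_schreier_add_one hK (by simp; omega) hempty,
        hLB.natLE_blockUnion⟩
    -- the `(d+1)`-st block is chosen in the tree `{A ∈ S_o | N ≤ A}`, whose rank is `≥ ω ^ o`
    have hstep := IH N (by omega) (fun A => g (P ∪ A)) (δ + ω ^ o * d) ?_ ?_
    · calc δ + ω ^ o * (d + 1 : ℕ) = δ + ω ^ o * d + ω ^ o := by
            rw [Nat.cast_succ, mul_add_one, add_assoc]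
        _ ≤ g P := by simpa using hstep
    · intro A hA B hB hAB
      obtain ⟨m, hBm, rfl⟩ := hAB
      refine hg (hmem _ hA.1 hA.2) (hmem B hB.1 hB.2) ⟨m, fun b hb => ?_, Finset.union_insert _ _ _⟩
      rcases Finset.mem_union.mp hb with hbP | hbB
      · exact (hPN b hbP).trans_le (hA.2 m (Finset.mem_insert_self m B))
      · exact hBm b hbB
    · intro A hA hNA
      simpa [blockUnion_append_singleton] using
        IHd (L ++ [A]) (by simp; omega) (hext A hA hNA)

lemma SchreierRankBound.add_one {o : Ordinal.{u}} (IH : SchreierRankBound lseq o)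
    (hempty : ∅ ∈ Schreier lseq o) : SchreierRankBound lseq (o + 1) := by
  intro n hn g δ hg hδ
  have key : ∀ K, n ≤ K → δ + ω ^ o * K ≤ g ∅ := fun K hnK => by
    simpa [blockUnion] using add_opow_mul_le_of_isBlockChain IH hempty (hn.trans hnK)
      (hg.mono fun A hA => ⟨hA.1, hA.2.mono hnK⟩) (fun A hA hKA => hδ A hA (hKA.mono hnK))
      K [] (by simp) ⟨by simp, List.Pairwise.nil⟩
  have hnormal : Order.IsNormal (fun x => δ + ω ^ o * x) :=
    (isNormal_add_right δ).comp (isNormal_mul_right (opow_pos o omega0_pos))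
  rw [opow_add_one, ← apply_omega0_of_isNormal hnormal]
  refine ciSup_le fun K => le_trans ?_ (key _ (le_max_right K n))
  gcongr
  exact le_max_left K n

lemma SchreierRankBound.of_isSuccLimit (hseq : IsFundSeq lseq) {o : Ordinal.{u}}
    (ho : Order.IsSuccLimit o) (ho₁ : o < (Cardinal.aleph 1).ord)
    (IH : ∀ m, SchreierRankBound lseq (lseq o m)) : SchreierRankBound lseq o := by
  intro n hn g δ hg hδ
  have hsub : ∀ m, {A ∈ Schreier lseq (lseq o m) | natLE (max n (m + 1)) A} ⊆
      {A ∈ Schreier lseq o | natLE n A} := fun m A ⟨hA, hnA⟩ =>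
    ⟨mem_schreier_of_mem_fundSeq hseq ho ho₁ hA (hnA.mono (le_max_right _ _)),
      hnA.mono (le_max_left _ _)⟩
  have key : ∀ m, δ + ω ^ lseq o m ≤ g ∅ := fun m =>
    IH m _ (hn.trans (le_max_left _ _)) g δ (hg.mono (hsub m))
      fun A hA hnA => hδ A (hsub m ⟨hA, hnA⟩).1 (hsub m ⟨hA, hnA⟩).2
  have hnormal : Order.IsNormal (fun x : Ordinal.{u} => δ + ω ^ x) :=
    (isNormal_add_right δ).comp (isNormal_opow one_lt_omega0)
  rw [← (hseq o ho ho₁).2.2, hnormal.map_iSup bddAbove_of_small]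
  exact ciSup_le key

theorem schreierRankBound (hseq : IsFundSeq lseq) {α : Ordinal.{u}}
    (hα : α < (Cardinal.aleph 1).ord) : SchreierRankBound lseq α := by
  induction α using Ordinal.limitRecOn with
  | zero => exact schreierRankBound_zero
  | add_one o IH =>
    have ho := (Order.lt_add_one_iff.mpr le_rfl).trans hα
    exact (IH ho).add_one (empty_mem_schreier hseq ho)
  | limit o ho IH =>
    exact .of_isSuccLimit hseq ho hα fun m =>
      have hlt := (hseq o ho hα).2.1 m
      IH _ hlt (hlt.trans hα)

end RankBound

section Rank

variable {lseq : Ordinal.{u} → ℕ → Ordinal.{u}} {α : Ordinal.{u}}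

theorem opow_le_rank_of_precStar (hseq : IsFundSeq lseq) (hα : α < (Cardinal.aleph 1).ord)
    {β : Type u} {r : β → β → Prop} (hwf : WellFounded r) (F : ↥(Schreier lseq α) → β)
    (hF : ∀ A B : ↥(Schreier lseq α), PrecStar A.1 B.1 → r (F A) (F B)) :
    Ordinal.omega0 ^ α ≤ (hwf.apply (F ⟨∅, empty_mem_schreier hseq hα⟩)).rank := by
  classical
  let g : Finset ℕ → Ordinal.{u} := fun A =>
    if hA : A ∈ Schreier lseq α then (hwf.apply (F ⟨A, hA⟩)).rank else 0
  have hg : DecreasesAlongPrecStar {A ∈ Schreier lseq α | natLE 1 A} g := by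
    intro A hA B hB hAB
    simp only [g, dif_pos hA.1, dif_pos hB.1]
    exact (hwf.apply _).rank_lt_of_rel (hF ⟨A, hA.1⟩ ⟨B, hB.1⟩ hAB)
  simpa [g, dif_pos (empty_mem_schreier hseq hα)] using
    schreierRankBound hseq hα 1 le_rfl g 0 hg fun _ _ _ => zero_le

theorem opow_add_one_le_relRankOn (hseq : IsFundSeq lseq) (hα : α < (Cardinal.aleph 1).ord)
    {β : Type u} {r : β → β → Prop} {S : Set β} (hwf : WellFounded fun p q : S => r p q)
    (F : ↥(Schreier lseq α) → β) (hFS : ∀ A, F A ∈ S)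
    (hF : ∀ A B : ↥(Schreier lseq α), PrecStar A.1 B.1 → r (F A) (F B)) :
    Ordinal.omega0 ^ α + 1 ≤ relRankOn r S hwf := by
  have hrank := opow_le_rank_of_precStar hseq hα hwf (fun A => ⟨F A, hFS A⟩) hF
  calc Ordinal.omega0 ^ α + 1 ≤ Order.succ (hwf.apply ⟨F _, hFS _⟩).rank := by
        rw [Order.succ_eq_add_one]; gcongr
    _ ≤ relRankOn r S hwf := le_ciSup (f := fun a : S => Order.succ (hwf.apply a).rank)
        Ordinal.bddAbove_of_small _

end Rank

theorem mem_coaTheta_of_coarse_bounds {X E : Type*} [NormedAddCommGroup X] [Module ℝ X]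
    [MetricSpace E] {R : Set ℝ} {e : ℕ → X} {S : Set X} {f : S → E} {κ ω : ℝ → ℝ}
    (hκ : MonotoneOn κ (Ici 0)) (hω : MonotoneOn ω (Ici 0)) (hκ_top : Tendsto κ atTop atTop)
    (hf : ∀ x y : S, κ (dist x y) ≤ dist (f x) (f y) ∧ dist (f x) (f y) ≤ ω (dist x y))
    {φ : X → E} (hφ : ∀ x : S, φ x = f x) {A : Finset ℕ} (hA : RComb R e A ⊆ S) :
    (⟨fun t => .ofReal (κ t), fun t => .ofReal (ω t), A, φ⟩ : QuadF X E) ∈ CoaTheta R e := by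
  refine ⟨⟨fun r hr s hs hrs => ENNReal.ofReal_le_ofReal
      (hκ (Zset_subset_Ici hr) (Zset_subset_Ici hs) hrs),
    fun r hr s hs hrs => ENNReal.ofReal_le_ofReal
      (hω (Zset_subset_Ici hr) (Zset_subset_Ici hs) hrs),
    fun x hx y hy hxy => ?_⟩, fun _ _ => ENNReal.ofReal_lt_top,
    ENNReal.tendsto_ofReal_atTop.comp (hκ_top.comp tendsto_natCast_atTop_atTop)⟩
  have hd : 0 < dist x y := dist_pos.mpr hxy
  obtain ⟨hlow, hupp⟩ := hf ⟨x, hA hx⟩ ⟨y, hA hy⟩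
  have hφx : φ x = f ⟨x, hA hx⟩ := hφ ⟨x, hA hx⟩
  have hφy : φ y = f ⟨y, hA hy⟩ := hφ ⟨y, hA hy⟩
  rw [Subtype.dist_eq] at hlow hupp
  simp only [edist_dist, hφx, hφy]
  exact ⟨ENNReal.ofReal_le_ofReal ((hκ (tminus_nonneg hd) hd.le (tminus_le hd)).trans hlow),
    ENNReal.ofReal_le_ofReal (hupp.trans (hω hd.le (hd.le.trans (le_tplus hd)) (le_tplus hd)))⟩

lemma rComb_subset_zSchreierSet {lseq : Ordinal → ℕ → Ordinal} {α : Ordinal} {A : Finset ℕ}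
    (hA : A ∈ Schreier lseq α) : RComb ZR stdBasis A ⊆ ZSchreierSet lseq α := by
  rintro x ⟨c, hc, rfl⟩
  choose t ht using hc
  exact ⟨A, hA, t, Finset.sum_congr rfl fun i _ => by rw [ht i]⟩

theorem stmt19 {E : Type*} [MetricSpace E]
    (lseq : Ordinal → ℕ → Ordinal) (hseq : IsFundSeq lseq)
    (α : Ordinal) (hα : α < (Cardinal.aleph 1).ord)
    (h : ∃ f : ↥(ZSchreierSet lseq α) → E, CoarseEmbeddingMap f) :
    (∃ F : ↥(Schreier lseq α) → QuadF c0 E,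
      (∀ A, F A ∈ CoaTheta (E := E) ZR stdBasis) ∧
      ∀ A B : ↥(Schreier lseq α), PrecStar A.1 B.1 →
        QuadFRel ZR stdBasis (F A) (F B)) ∧
    ∀ hwf : WellFounded fun p q : ↥(CoaTheta (E := E) ZR stdBasis) =>
        QuadFRel ZR stdBasis p.1 q.1,
      Ordinal.omega0 ^ α + 1 ≤
        relRankOn (QuadFRel ZR stdBasis) (CoaTheta (E := E) ZR stdBasis) hwf := by
  obtain ⟨f, κ, ω, hκ, hω, -, hκ_top, hf⟩ := h
  have h₀ : (0 : c0) ∈ ZSchreierSet lseq α :=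
    rComb_subset_zSchreierSet (empty_mem_schreier hseq hα) ⟨0, fun _ => ⟨0, by simp⟩, by simp⟩
  let φ : c0 → E := Function.extend Subtype.val f fun _ => f ⟨0, h₀⟩
  let F : ↥(Schreier lseq α) → QuadF c0 E :=
    fun A => ⟨fun t => .ofReal (κ t), fun t => .ofReal (ω t), A.1, φ⟩
  have hFS : ∀ A, F A ∈ CoaTheta (E := E) ZR stdBasis := fun A =>
    mem_coaTheta_of_coarse_bounds hκ hω hκ_top hf (Subtype.val_injective.extend_apply _ _)
      (rComb_subset_zSchreierSet A.2)
  have hFrel : ∀ A B : ↥(Schreier lseq α), PrecStar A.1 B.1 → QuadFRel ZR stdBasis (F A) (F B) :=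
    fun _ _ hAB => ⟨rfl, rfl, hAB, fun _ _ => rfl⟩
  exact ⟨⟨F, hFS, hFrel⟩, fun hwf => opow_add_one_le_relRankOn hseq hα hwf F hFS hFrel⟩
end
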